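/- Let n > 2 and m > 2 be integers. If the ring 𝕋ₙ(𝔽₂) of n×n upper triangular matrices over 𝔽₂ is m-torsion clean, then m ≥ n. -/

import Mathlib

def AlmostTorsionClean (R : Type*) [Ring R] (m : ℕ) : Prop :=
  ∀ r : R, ∃ u e : R, IsUnit u ∧ u ^ m = 1 ∧ e * e = e ∧ r = u + e

def TorsionClean (R : Type*) [Ring R] (m : ℕ) : Prop :=
  AlmostTorsionClean R m ∧ ∀ k : ℕ, 0 < k → k < m → ¬ AlmostTorsionClean R k

/-- The ring of n×n upper triangular matrices over 𝔽₂, as a subring of the full matrix ring. -/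
def Triangular (n : ℕ) : Subring (Matrix (Fin n) (Fin n) (ZMod 2)) where
  carrier := {A | A.BlockTriangular id}
  zero_mem' := Matrix.blockTriangular_zero
  one_mem' := Matrix.blockTriangular_one
  add_mem' := fun ha hb => ha.add hb
  neg_mem' := fun ha => ha.neg
  mul_mem' := fun ha hb => ha.mul hb

/-! Write the shift matrix `N` of `𝕋ₙ(𝔽₂)` as `u + e` with `uᵐ = 1` and `e² = e`. A triangular
matrix is invertible exactly when its diagonal entries are, so `e` has diagonal `-diag u`, is
invertible, and being idempotent equals `1`; hence `u = 1 + N`. In characteristic two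
`(1 + N) ^ 2 ^ k = 1 + N ^ 2 ^ k`, so the order of `1 + N` is the least power of two that is at
least `n`, and it divides `m`. -/

namespace Matrix

section Triangular

variable {ι R : Type*} [Fintype ι] [DecidableEq ι] [LinearOrder ι] [CommRing R]

theorem IsUpperTriangular.isUnit_iff {M : Matrix ι ι R} (h : M.IsUpperTriangular) :
    IsUnit M ↔ ∀ i, IsUnit (M i i) := by
  rw [isUnit_iff_isUnit_det, det_of_isUpperTriangular h, IsUnit.prod_univ_iff]

theorem eq_one_of_add_eq_of_diag_eq_zero {A U E : Matrix ι ι R} (hA : ∀ i, A i i = 0)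
    (hU : U.IsUpperTriangular) (hE : E.IsUpperTriangular) (hUunit : IsUnit U)
    (hEE : IsIdempotentElem E) (hAUE : A = U + E) : E = 1 := by
  have hdiag : ∀ i, E i i = -U i i := fun i => by
    have := congr_fun₂ hAUE i i
    rw [hA, add_apply] at this
    exact eq_neg_of_add_eq_zero_right this.symm
  have hEunit : IsUnit E :=
    hE.isUnit_iff.2 fun i => hdiag i ▸ (hU.isUnit_iff.1 hUunit i).neg
  exact (IsIdempotentElem.iff_eq_one_of_isUnit hEunit).1 hEE

end Triangular

section Shift

variable {n : ℕ} {R : Type*}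

def shiftMatrix (n : ℕ) (R : Type*) [Zero R] [One R] : Matrix (Fin n) (Fin n) R :=
  of fun i j => if (i : ℕ) + 1 = j then 1 else 0

theorem shiftMatrix_apply [Zero R] [One R] (i j : Fin n) :
    shiftMatrix n R i j = if (i : ℕ) + 1 = j then 1 else 0 :=
  rfl

theorem shiftMatrix_apply_self [Zero R] [One R] (i : Fin n) : shiftMatrix n R i i = 0 :=
  if_neg (by omega)

theorem isUpperTriangular_shiftMatrix [Zero R] [One R] :
    (shiftMatrix n R).IsUpperTriangular := fun i j hji =>
  if_neg (by simp only [id] at hji; omega)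

theorem shiftMatrix_pow_apply [Semiring R] (k : ℕ) (i j : Fin n) :
    (shiftMatrix n R ^ k) i j = if (i : ℕ) + k = j then 1 else 0 := by
  induction k generalizing j with
  | zero => simp [one_apply, Fin.ext_iff]
  | succ k ih =>
    simp only [pow_succ, mul_apply, ih, shiftMatrix_apply, ite_mul, one_mul, zero_mul]
    rw [Fin.sum_univ_eq_sum_range
      (fun l => if (i : ℕ) + k = l then if l + 1 = (j : ℕ) then (1 : R) else 0 else 0),
      Finset.sum_ite_eq]
    simp only [Finset.mem_range]
    split_ifs <;> first | rfl | omega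

theorem shiftMatrix_pow_eq_zero [Semiring R] {k : ℕ} (hk : n ≤ k) : shiftMatrix n R ^ k = 0 := by
  ext i j
  rw [shiftMatrix_pow_apply, if_neg (by omega), zero_apply]

theorem shiftMatrix_pow_ne_zero [Semiring R] [Nontrivial R] {k : ℕ} (hk : k < n) :
    shiftMatrix n R ^ k ≠ 0 := fun h => by
  have := congr_fun₂ h ⟨0, by omega⟩ ⟨k, hk⟩
  simp [shiftMatrix_pow_apply] at this

end Shift

end Matrix

open Matrix

theorem orderOf_one_add_eq_two_pow {R : Type*} [Ring R] [CharP R 2] {x : R} {k : ℕ}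
    (hk : x ^ 2 ^ k ≠ 0) (hk' : x ^ 2 ^ (k + 1) = 0) : orderOf (1 + x) = 2 ^ (k + 1) := by
  have frobenius : ∀ j, (1 + x) ^ 2 ^ j = 1 + x ^ 2 ^ j := fun j => by
    rw [add_pow_char_pow_of_commute _ j (Commute.one_left x), one_pow]
  apply orderOf_eq_prime_pow <;> simp [frobenius, hk, hk']

theorem orderOf_one_add_shiftMatrix {n : ℕ} {R : Type*} [Ring R] [CharP R 2] (hn : 2 ≤ n) :
    orderOf (1 + shiftMatrix n R) = 2 ^ (Nat.log 2 (n - 1) + 1) := by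
  have : Nonempty (Fin n) := ⟨⟨0, by omega⟩⟩
  have : Nontrivial R := CharP.nontrivial_of_char_ne_one (by norm_num : (2 : ℕ) ≠ 1)
  apply orderOf_one_add_eq_two_pow
  · exact shiftMatrix_pow_ne_zero ((Nat.pow_log_le_self 2 (by omega)).trans_lt (by omega))
  · exact shiftMatrix_pow_eq_zero (by have := Nat.lt_pow_succ_log_self one_lt_two (n - 1); omega)

theorem n_le_m_of_Tn_F2_m_torsion_clean (n m : ℕ) (hn : 2 < n) (hm : 2 < m)
    (h : TorsionClean (Triangular n) m) : n ≤ m := by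
  obtain ⟨u, e, hu, hum, hee, hsum⟩ :=
    h.1 ⟨shiftMatrix n (ZMod 2), isUpperTriangular_shiftMatrix⟩
  have hN : shiftMatrix n (ZMod 2) = u + e := congrArg Subtype.val hsum
  have he : (e : Matrix (Fin n) (Fin n) (ZMod 2)) = 1 :=
    eq_one_of_add_eq_of_diag_eq_zero shiftMatrix_apply_self u.2 e.2
      (hu.map (Triangular n).subtype) (congrArg Subtype.val hee) hN
  have hu_eq : (u : Matrix (Fin n) (Fin n) (ZMod 2)) = 1 + shiftMatrix n (ZMod 2) := by
    have : Nonempty (Fin n) := ⟨⟨0, by omega⟩⟩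
    rw [hN, he, add_left_comm, CharTwo.add_self_eq_zero, add_zero]
  have hpow : (1 + shiftMatrix n (ZMod 2)) ^ m = 1 := by
    rw [← hu_eq, ← Subring.coe_pow, hum, OneMemClass.coe_one]
  calc n ≤ 2 ^ (Nat.log 2 (n - 1) + 1) := by
        have := Nat.lt_pow_succ_log_self one_lt_two (n - 1); omega
    _ = orderOf (1 + shiftMatrix n (ZMod 2)) := (orderOf_one_add_shiftMatrix hn.le).symm
    _ ≤ m := Nat.le_of_dvd (by omega) (orderOf_dvd_of_pow_eq_one hpow)
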